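/- Let f satisfy the relative smoothness condition with constants μ_d(f) > 0 and L_d(f), let L ≥ L_d(f) and δ ≥ 0, and let {x_k}_{k≥0} be a sequence generated by the Inexact Gradient Method with Memory in which at each iteration k the test-point set Z_k contains x_k and satisfies Z_k ⊆ {x_0, …, x_k}: for each k there exists λ̄_k ∈ Δ_{m_k} satisfying ⟨λ̄_k − λ, f_{*,k} − G_kᵀ x_{k+1}⟩ ≤ δ for all λ ∈ Δ_{m_k}, where x_{k+1} = y*_L(L∇d(x_k) − G_k λ̄_k). Let x* be a minimizer of F = f + ψ with F* = F(x*), let T ≥ 1, and suppose F(x_k) − F* ≥ δ for all 1 ≤ k ≤ T. Then, with γ = μ_d(f)/L and Δ*_T = min_{1≤k≤T} [F(x_k) − F*]: Δ*_T ≤ δ + ((1−γ)^T μ_d(f) / (1 − (1−γ)^T)) β_d(x_0, x*) ≤ δ + (μ_d(f) / (e^{γT} − 1)) β_d(x_0, x*) ≤ δ + (L/T) β_d(x_0, x*). -/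

import Mathlib

/-!
Each step is a Bregman proximal step on the aggregated model
`ℓ_k(y) = ∑ᵢ λ̄_k⁽ⁱ⁾ (f(z_{k,i}) + ⟨∇f(z_{k,i}), y - z_{k,i}⟩)`. Relative smoothness bounds
`f(x_{k+1})` by the linearization at `x_k` plus `L β(x_k, x_{k+1})`; approximate stationarity,
tested at the vertex of the simplex that carries `x_k ∈ Z_k`, trades that linearization for `ℓ_k`
at the cost `δ`; the three-point property of the prox step compares with `ℓ_k(x*)`, and relative
strong convexity gives `ℓ_k(x*) ≤ f(x*) - μ β(x_k, x*)` because `Z_k` only holds earlier iterates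
and `β(·, x*)` does not increase along them. Altogether
`F(x_{k+1}) - F* - δ ≤ (L - μ) β(x_k, x*) - L β(x_{k+1}, x*)`, which together with
`F(x_{k+1}) - F* ≥ δ` also propagates the monotonicity of `β(x_k, x*)`. Unrolling
`β_{k+1} ≤ (1 - γ) β_k - (Δ*_T - δ) / L` gives the first bound; the other two follow from
`1 - γ ≤ e^{-γ}` and `e^t - 1 ≥ t`.
-/

open Finset Set

theorem sum_mul_le_of_mem_stdSimplex {ι : Type*} [Fintype ι] {w c : ι → ℝ} {C : ℝ}
    (hw : w ∈ stdSimplex ℝ ι) (hc : ∀ i, c i ≤ C) : ∑ i, w i * c i ≤ C :=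
  calc ∑ i, w i * c i ≤ ∑ i, w i * C :=
        sum_le_sum fun i _ => mul_le_mul_of_nonneg_left (hc i) (hw.1 i)
    _ = C := by rw [← sum_mul, hw.2, one_mul]

theorem sum_sub_single_mul {ι : Type*} [Fintype ι] [DecidableEq ι] (w c : ι → ℝ) (j : ι) :
    ∑ i, (w i - (Pi.single j 1 : ι → ℝ) i) * c i = ∑ i, w i * c i - c j := by
  simp [sub_mul, sum_sub_distrib, Pi.single_apply]

section GradientStep

variable {E : Type*} [NormedAddCommGroup E] [NormedSpace ℝ E]

theorem HasDerivAt.nonneg_of_isMinOn_Icc {g : ℝ → ℝ} {c : ℝ} (hg : HasDerivAt g c 0)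
    (hmin : IsMinOn g (Icc 0 1) 0) : 0 ≤ c := by
  have hcone : (1 : ℝ) ∈ posTangentConeAt (Icc (0 : ℝ) 1) 0 :=
    mem_posTangentConeAt_of_segment_subset (by simp [segment_eq_Icc])
  simpa using hmin.localize.hasFDerivWithinAt_nonneg hg.hasFDerivAt.hasFDerivWithinAt hcone

theorem ConvexOn.apply_add_smul_sub_le {S : Set E} {ψ : E → ℝ} (hψ : ConvexOn ℝ S ψ)
    {p y : E} (hp : p ∈ S) (hy : y ∈ S) {t : ℝ} (ht : t ∈ Icc (0 : ℝ) 1) :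
    ψ (p + t • (y - p)) ≤ ψ p + t * (ψ y - ψ p) := by
  have h := hψ.2 hp hy (sub_nonneg.2 ht.2) ht.1 (sub_add_cancel 1 t)
  rw [Convex.combo_eq_smul_sub_add (sub_add_cancel 1 t), add_comm, smul_eq_mul,
    smul_eq_mul] at h
  linarith

theorem ConvexOn.fderiv_sub_le {S : Set E} {d : E → ℝ} {D : E →L[ℝ] ℝ} {p q : E}
    (hd : ConvexOn ℝ S d) (hp : p ∈ S) (hq : q ∈ S) (hD : HasFDerivAt d D p) :
    D (q - p) ≤ d q - d p := by
  have hline : HasDerivAt (fun t : ℝ => d (p + t • (q - p))) (D (q - p)) 0 :=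
    hD.hasLineDerivAt _
  have hg := (hasDerivAt_mul_const (d q - d p)).sub hline
  refine sub_nonneg.1 (hg.nonneg_of_isMinOn_Icc fun t ht => ?_)
  have := hd.apply_add_smul_sub_le hp hq ht
  simp only [mem_ofPred_eq, Pi.sub_apply, zero_mul, zero_smul, add_zero, zero_sub]
  linarith

theorem IsMinOn.sub_le_fderiv_of_convexOn {S : Set E} (hS : Convex ℝ S) {φ ψ : E → ℝ}
    {D : E →L[ℝ] ℝ} {p y : E} (hψ : ConvexOn ℝ S ψ) (hp : p ∈ S) (hy : y ∈ S)
    (hφ : HasFDerivAt φ D p) (hmin : IsMinOn (fun w => φ w + ψ w) S p) :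
    ψ p - ψ y ≤ D (y - p) := by
  have hline : HasDerivAt (fun t : ℝ => φ (p + t • (y - p))) (D (y - p)) 0 :=
    hφ.hasLineDerivAt _
  -- on the segment `[p, y]`, `ψ` lies below its chord, so `t = 0` minimizes `φ + chord`
  have hg := hline.add (hasDerivAt_mul_const (ψ y - ψ p))
  suffices 0 ≤ D (y - p) + (ψ y - ψ p) by linarith
  refine hg.nonneg_of_isMinOn_Icc fun t ht => ?_
  have hw := hmin (hS.add_smul_sub_mem hp hy ht)
  have := hψ.apply_add_smul_sub_le hp hy ht
  simp only [mem_ofPred_eq, Pi.add_apply, zero_mul, zero_smul, add_zero] at hw ⊢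
  linarith

def bregman (d : E → ℝ) (d' : E → E →L[ℝ] ℝ) (x y : E) : ℝ :=
  d y - d x - d' x (y - x)

theorem bregman_nonneg {S : Set E} {d : E → ℝ} {d' : E → E →L[ℝ] ℝ} {x y : E}
    (hd : ConvexOn ℝ S d) (hx : x ∈ S) (hy : y ∈ S) (hdx : HasFDerivAt d (d' x) x) :
    0 ≤ bregman d d' x y := by
  have := hd.fderiv_sub_le hx hy hdx
  unfold bregman
  linarith

theorem bregman_three_point (d : E → ℝ) (d' : E → E →L[ℝ] ℝ) (x y z : E) :
    bregman d d' x z = bregman d d' x y + bregman d d' y z + (d' y - d' x) (z - y) := by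
  simp only [bregman, sub_apply, map_sub]
  ring

theorem bregman_prox_three_point {S : Set E} (hS : Convex ℝ S) {d ψ : E → ℝ}
    {d' : E → E →L[ℝ] ℝ} (hψ : ConvexOn ℝ S ψ) (g : E →L[ℝ] ℝ) {L : ℝ} {a p y : E}
    (hp : p ∈ S) (hy : y ∈ S) (hdp : HasFDerivAt d (d' p) p)
    (hmax : IsMaxOn (fun w => (L • d' a - g) w - L * d w - ψ w) S p) :
    g p + L * bregman d d' a p + ψ p + L * bregman d d' p y ≤
      g y + L * bregman d d' a y + ψ y := by
  have hφ : HasFDerivAt (fun w => L * d w - (L • d' a - g) w) (L • d' p - (L • d' a - g)) p :=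
    (hdp.const_mul L).sub (L • d' a - g).hasFDerivAt
  have hmin : IsMinOn (fun w => L * d w - (L • d' a - g) w + ψ w) S p := fun w hw => by
    have := hmax hw
    simp only [mem_ofPred_eq] at this ⊢
    linarith
  have hopt := hmin.sub_le_fderiv_of_convexOn hS hψ hp hy hφ
  simp only [sub_apply, smul_apply, smul_eq_mul, map_sub] at hopt
  rw [bregman_three_point d d' a p y, sub_apply, map_sub, map_sub]
  linarith

theorem gmm_step_descent {S : Set E} (hS : Convex ℝ S) {d f ψ : E → ℝ}
    {d' f' : E → E →L[ℝ] ℝ} (hψ : ConvexOn ℝ S ψ) {μ L δ : ℝ} {n : ℕ} {z : Fin n → E}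
    {lam : Fin n → ℝ} {a p y : E} {j : Fin n}
    (hlam : lam ∈ stdSimplex ℝ (Fin n)) (hj : z j = a)
    (hp : p ∈ S) (hy : y ∈ S) (hdp : HasFDerivAt d (d' p) p)
    (hmax : IsMaxOn (fun w => (L • d' a - ∑ i, lam i • f' (z i)) w - L * d w - ψ w) S p)
    (hstat : ∀ ν ∈ stdSimplex ℝ (Fin n),
      ∑ i, (lam i - ν i) * (f' (z i) (z i) - f (z i) - f' (z i) p) ≤ δ)
    (hup : f p - f a - f' a (p - a) ≤ L * bregman d d' a p)
    (hlow : ∀ i, μ * bregman d d' a y ≤ f y - f (z i) - f' (z i) (y - z i)) :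
    f p + ψ p - (f y + ψ y) - δ ≤ (L - μ) * bregman d d' a y - L * bregman d d' p y := by
  set g : E →L[ℝ] ℝ := ∑ i, lam i • f' (z i)
  have hg : ∀ w, g w = ∑ i, lam i * f' (z i) w := fun w => by simp [g]
  have hvertex : f a + f' a (p - a) ≤ ∑ i, lam i * (f (z i) + f' (z i) (p - z i)) + δ := by
    have := hstat _ (single_mem_stdSimplex ℝ j)
    rw [sum_sub_single_mul, hj] at this
    simp only [map_sub, mul_sub, mul_add, sum_sub_distrib, sum_add_distrib] at this ⊢
    linarith
  have hmodel : ∑ i, lam i * (f (z i) + f' (z i) (y - z i)) ≤ f y - μ * bregman d d' a y :=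
    sum_mul_le_of_mem_stdSimplex hlam fun i => by linarith [hlow i]
  have hshift : ∑ i, lam i * (f (z i) + f' (z i) (y - z i)) =
      ∑ i, lam i * (f (z i) + f' (z i) (p - z i)) + (g y - g p) := by
    simp only [hg, map_sub, mul_sub, mul_add, sum_sub_distrib, sum_add_distrib]
    ring
  have hprox := bregman_prox_three_point hS hψ g hp hy hdp hmax
  linarith

end GradientStep

theorem forall_le_le_of_succ_le {α : Type*} [Preorder α] {r : ℕ → α} {T : ℕ}
    (h : ∀ k < T, (∀ j ≤ k, r k ≤ r j) → r (k + 1) ≤ r k) : ∀ k ≤ T, ∀ j ≤ k, r k ≤ r j := by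
  intro k
  induction k with
  | zero => intro _ j hj; rw [Nat.le_zero.1 hj]
  | succ k ih =>
    intro hk j hj
    rcases Nat.of_le_succ hj with hj | rfl
    · have hkT : k ≤ T := k.le_succ.trans hk
      exact (h k hk (ih hkT)).trans (ih hkT j hj)
    · exact le_rfl

theorem forall_le_le_of_descent {r F : ℕ → ℝ} {μ L δ : ℝ} {T : ℕ} (hμ : 0 ≤ μ) (hL : 0 < L)
    (hr : ∀ k, 0 ≤ r k)
    (hdesc : ∀ k < T, (∀ j ≤ k, r k ≤ r j) → F (k + 1) - δ ≤ (L - μ) * r k - L * r (k + 1))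
    (hF : ∀ k < T, δ ≤ F (k + 1)) : ∀ k ≤ T, ∀ j ≤ k, r k ≤ r j :=
  forall_le_le_of_succ_le fun k hk hmono => by
    have := hdesc k hk hmono
    have := hF k hk
    have := mul_nonneg hμ (hr k)
    exact le_of_mul_le_mul_left (by linarith) hL

theorem add_mul_geom_sum_le_pow_mul {r : ℕ → ℝ} {q c : ℝ} (hq : 0 ≤ q) :
    ∀ T : ℕ, (∀ k < T, r (k + 1) ≤ q * r k - c) →
      r T + c * ∑ j ∈ range T, q ^ j ≤ q ^ T * r 0
  | 0, _ => by simp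
  | T + 1, hr => by
    have ih := add_mul_geom_sum_le_pow_mul hq T fun k hk => hr k (hk.trans T.lt_succ_self)
    have hstep := hr T T.lt_succ_self
    rw [geom_sum_succ, pow_succ']
    nlinarith [mul_le_mul_of_nonneg_left ih hq]

theorem le_of_descent_recursion {r F : ℕ → ℝ} {μ L δ Δ : ℝ} {T : ℕ} (hμ : 0 < μ)
    (hμL : μ ≤ L) (hT : 1 ≤ T) (hrT : 0 ≤ r T)
    (hdesc : ∀ k < T, F (k + 1) - δ ≤ (L - μ) * r k - L * r (k + 1))
    (hΔ : ∀ k < T, Δ ≤ F (k + 1)) :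
    Δ ≤ δ + (1 - μ / L) ^ T * μ / (1 - (1 - μ / L) ^ T) * r 0 := by
  have hL : 0 < L := hμ.trans_le hμL
  have hq0 : 0 ≤ 1 - μ / L := sub_nonneg.2 ((div_le_one hL).2 hμL)
  have hqT : 0 < 1 - (1 - μ / L) ^ T :=
    sub_pos.2 (pow_lt_one₀ hq0 (by linarith [div_pos hμ hL]) (by omega))
  have hrec : ∀ k < T, r (k + 1) ≤ (1 - μ / L) * r k - (Δ - δ) / L := fun k hk => by
    have := hdesc k hk
    have := hΔ k hk
    rw [show (1 - μ / L) * r k - (Δ - δ) / L = ((L - μ) * r k - (Δ - δ)) / L by field_simp,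
      le_div_iff₀ hL]
    linarith
  have hsum := add_mul_geom_sum_le_pow_mul hq0 T hrec
  have hgeom := mul_neg_geom_sum (1 - μ / L) T
  rw [sub_sub_cancel] at hgeom
  have hgap : (Δ - δ) * (1 - (1 - μ / L) ^ T) ≤ (1 - μ / L) ^ T * μ * r 0 :=
    calc (Δ - δ) * (1 - (1 - μ / L) ^ T)
        = μ * ((Δ - δ) / L * ∑ j ∈ range T, (1 - μ / L) ^ j) := by rw [← hgeom]; field_simp
      _ ≤ μ * ((1 - μ / L) ^ T * r 0) := mul_le_mul_of_nonneg_left (by linarith) hμ.le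
      _ = (1 - μ / L) ^ T * μ * r 0 := by ring
  rw [mul_comm_div, ← mul_div_assoc, ← sub_le_iff_le_add', le_div_iff₀ hqT]
  linarith

theorem one_sub_pow_mul_div_le_div_exp_sub_one {γ c : ℝ} {T : ℕ} (hγ0 : 0 < γ) (hγ1 : γ ≤ 1)
    (hT : 1 ≤ T) (hc : 0 ≤ c) :
    (1 - γ) ^ T * c / (1 - (1 - γ) ^ T) ≤ c / (Real.exp (γ * T) - 1) := by
  have hqT : 0 < 1 - (1 - γ) ^ T :=
    sub_pos.2 (pow_lt_one₀ (sub_nonneg.2 hγ1) (by linarith) (by omega))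
  have hexp : 0 < Real.exp (γ * T) - 1 := by
    have : (0 : ℝ) < γ * T := mul_pos hγ0 (by exact_mod_cast hT)
    linarith [Real.add_one_le_exp (γ * T)]
  have hprod : (1 - γ) ^ T * Real.exp (γ * T) ≤ 1 := by
    have hbase : (1 - γ) * Real.exp γ ≤ 1 := by
      have := Real.one_sub_le_exp_neg γ
      calc (1 - γ) * Real.exp γ ≤ Real.exp (-γ) * Real.exp γ :=
            mul_le_mul_of_nonneg_right this (Real.exp_pos γ).le
        _ = 1 := by rw [← Real.exp_add, neg_add_cancel, Real.exp_zero]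
    rw [mul_comm γ, Real.exp_nat_mul, ← mul_pow]
    exact pow_le_one₀ (mul_nonneg (sub_nonneg.2 hγ1) (Real.exp_pos γ).le) hbase
  rw [div_le_div_iff₀ hqT hexp]
  nlinarith [mul_le_mul_of_nonneg_left hprod hc]

theorem div_exp_sub_one_le_div {x c : ℝ} (hx : 0 < x) (hc : 0 ≤ c) :
    c / (Real.exp x - 1) ≤ c / x :=
  div_le_div_of_nonneg_left hc hx (by linarith [Real.add_one_le_exp x])

theorem gmm_th_RateIGMMb_general
    {E : Type*} [NormedAddCommGroup E] [NormedSpace ℝ E]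
    -- `Sd = dom d`, `U = dom f` (open), `S = dom ψ`
    (Sd U S : Set E) (hSU : S ⊆ U) (hUSd : U ⊆ Sd) (hUopen : IsOpen U) (hSconv : Convex ℝ S)
    (d f ψ : E → ℝ) (d' f' : E → E →L[ℝ] ℝ)
    (hdconv : StrictConvexOn ℝ Sd d)
    (hd' : ∀ x ∈ interior Sd, HasFDerivAt d (d' x) x)
    (hψconv : ConvexOn ℝ S ψ)
    -- Bregman distance of `d`
    (β : E → E → ℝ) (hβ : ∀ x y, β x y = d y - d x - (d' x) (y - x))
    -- relative smoothness of `f` with constants `0 < μ_d(f) ≤ L_d(f)`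
    (μ Lf : ℝ) (hμ0 : 0 < μ) (hμLf : μ ≤ Lf)
    (hsmooth : ∀ x ∈ U, ∀ y ∈ U,
      μ * β x y ≤ f y - f x - (f' x) (y - x) ∧ f y - f x - (f' x) (y - x) ≤ Lf * β x y)
    (L δ : ℝ) (hL : Lf ≤ L)
    -- the iterates of the Inexact Gradient Method with Memory
    (x : ℕ → E) (hxint : ∀ k, x k ∈ interior S)
    -- at step `k`: a bundle `Z_k` with `x_k ∈ Z_k ⊆ {x_0, …, x_k}`
    (m : ℕ → ℕ)
    (z : (k : ℕ) → Fin (m k) → E)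
    (hxmem : ∀ k, ∃ j, z k j = x k)
    (hZsub : ∀ k i, ∃ j ≤ k, z k i = x j)
    (lam : (k : ℕ) → Fin (m k) → ℝ) (hlam : ∀ k, lam k ∈ stdSimplex ℝ (Fin (m k)))
    -- `x_{k+1} = y*_L(L∇d(x_k) − G_k λ̄_k)`
    (hsucc : ∀ k, ∀ y ∈ S,
      (L • d' (x k) - ∑ i, lam k i • f' (z k i)) y - L * d y - ψ y ≤
      (L • d' (x k) - ∑ i, lam k i • f' (z k i)) (x (k + 1)) - L * d (x (k + 1))
        - ψ (x (k + 1)))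
    -- approximate stationarity: `⟨λ̄_k − λ, f_{*,k} − G_kᵀ x_{k+1}⟩ ≤ δ` for all `λ ∈ Δ_{m_k}`
    (hstat : ∀ k, ∀ ν ∈ stdSimplex ℝ (Fin (m k)),
      ∑ i, (lam k i - ν i) *
        ((f' (z k i)) (z k i) - f (z k i) - (f' (z k i)) (x (k + 1))) ≤ δ)
    (xstar : E) (hxstarS : xstar ∈ S)
    (T : ℕ) (hT : 1 ≤ T)
    -- `F(x_k) − F* ≥ δ` for `1 ≤ k ≤ T`
    (hbig : ∀ k, 1 ≤ k → k ≤ T → δ ≤ f (x k) + ψ (x k) - (f xstar + ψ xstar)) :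
    (Finset.Icc 1 T).inf' (Finset.nonempty_Icc.mpr hT)
        (fun k => f (x k) + ψ (x k) - (f xstar + ψ xstar)) ≤
      δ + ((1 - μ / L) ^ T * μ / (1 - (1 - μ / L) ^ T)) * β (x 0) xstar ∧
    δ + ((1 - μ / L) ^ T * μ / (1 - (1 - μ / L) ^ T)) * β (x 0) xstar ≤
      δ + (μ / (Real.exp ((μ / L) * T) - 1)) * β (x 0) xstar ∧
    δ + (μ / (Real.exp ((μ / L) * T) - 1)) * β (x 0) xstar ≤
      δ + (L / (T : ℝ)) * β (x 0) xstar := by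
  obtain rfl : β = bregman d d' := funext₂ hβ
  set F : ℕ → ℝ := fun k => f (x k) + ψ (x k) - (f xstar + ψ xstar)
  set r : ℕ → ℝ := fun k => bregman d d' (x k) xstar
  have hμL : μ ≤ L := hμLf.trans hL
  have hL0 : 0 < L := hμ0.trans_le hμL
  have hxU : ∀ k, x k ∈ U := fun k => hSU (interior_subset (hxint k))
  have hdU : ∀ w ∈ U, HasFDerivAt d (d' w) w := fun w hw =>
    hd' w (interior_maximal hUSd hUopen hw)
  have hβnn : ∀ w ∈ U, ∀ v ∈ U, 0 ≤ bregman d d' w v := fun w hw v hv =>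
    bregman_nonneg hdconv.convexOn (hUSd hw) (hUSd hv) (hdU w hw)
  have hr : ∀ k, 0 ≤ r k := fun k => hβnn _ (hxU k) _ (hSU hxstarS)
  have hdesc : ∀ k, (∀ j ≤ k, r k ≤ r j) → F (k + 1) - δ ≤ (L - μ) * r k - L * r (k + 1) := by
    intro k hmono
    obtain ⟨j, hj⟩ := hxmem k
    refine gmm_step_descent hSconv hψconv (hlam k) hj (interior_subset (hxint _)) hxstarS
      (hdU _ (hxU _)) (hsucc k) (hstat k) ((hsmooth _ (hxU k) _ (hxU (k + 1))).2.trans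
        (mul_le_mul_of_nonneg_right hL (hβnn _ (hxU k) _ (hxU (k + 1))))) fun i => ?_
    obtain ⟨j', hj', hzi⟩ := hZsub k i
    rw [hzi]
    exact (mul_le_mul_of_nonneg_left (hmono j' hj') hμ0.le).trans
      (hsmooth _ (hxU j') _ (hSU hxstarS)).1
  have hanti := forall_le_le_of_descent hμ0.le hL0 hr (fun k _ => hdesc k)
    fun k hk => hbig (k + 1) k.succ_pos hk
  refine ⟨?_, ?_, ?_⟩
  · exact le_of_descent_recursion hμ0 hμL hT (hr T) (fun k hk => hdesc k (hanti k hk.le))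
      fun k hk => Finset.inf'_le _ (Finset.mem_Icc.2 ⟨k.succ_pos, hk⟩)
  · refine add_le_add_right (mul_le_mul_of_nonneg_right ?_ (hr 0)) δ
    exact one_sub_pow_mul_div_le_div_exp_sub_one (div_pos hμ0 hL0) ((div_le_one hL0).2 hμL) hT
      hμ0.le
  · refine add_le_add_right (mul_le_mul_of_nonneg_right ?_ (hr 0)) δ
    have hγT : 0 < μ / L * T := by positivity
    calc μ / (Real.exp (μ / L * T) - 1) ≤ μ / (μ / L * T) := div_exp_sub_one_le_div hγT hμ0.le
      _ = L / T := by field_simp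

/-- Theorem `th-RateIGMMb` of "Gradient Methods with Memory".

For the sequence generated by the Inexact Gradient Method with Memory with `L ≥ L_d(f)`,
`μ_d(f) > 0`, bundles satisfying `x_k ∈ Z_k ⊆ {x_0, …, x_k}`, and `F(x_k) − F* ≥ δ` for
`1 ≤ k ≤ T`, the quantity `Δ*_T = min_{1≤k≤T} [F(x_k) − F*]` satisfies, with `γ = μ_d(f)/L`:
`Δ*_T ≤ δ + ((1−γ)^T μ/(1−(1−γ)^T)) β_d(x_0,x*) ≤ δ + (μ/(e^{γT}−1)) β_d(x_0,x*)
      ≤ δ + (L/T) β_d(x_0,x*)`. -/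
theorem gmm_th_RateIGMMb
    {E : Type*} [NormedAddCommGroup E] [NormedSpace ℝ E] [FiniteDimensional ℝ E]
    -- `Sd = dom d`, `U = dom f` (open), `S = dom ψ`
    (Sd U S : Set E) (hSU : S ⊆ U) (hUSd : U ⊆ Sd) (hUopen : IsOpen U) (hSconv : Convex ℝ S)
    (d f ψ : E → ℝ) (d' f' : E → E →L[ℝ] ℝ)
    (hdconv : StrictConvexOn ℝ Sd d)
    (hd' : ∀ x ∈ interior Sd, HasFDerivAt d (d' x) x)
    (hf' : ∀ x ∈ U, HasFDerivAt f (f' x) x)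
    (hfconv : ConvexOn ℝ U f)
    (hψconv : ConvexOn ℝ S ψ)
    -- Bregman distance of `d`
    (β : E → E → ℝ) (hβ : ∀ x y, β x y = d y - d x - (d' x) (y - x))
    -- relative smoothness of `f` with constants `0 < μ_d(f) ≤ L_d(f)`
    (μ Lf : ℝ) (hμ0 : 0 < μ) (hμLf : μ ≤ Lf)
    (hsmooth : ∀ x ∈ U, ∀ y ∈ U,
      μ * β x y ≤ f y - f x - (f' x) (y - x) ∧ f y - f x - (f' x) (y - x) ≤ Lf * β x y)
    (L δ : ℝ) (hL0 : 0 < L) (hL : Lf ≤ L) (hδ : 0 ≤ δ)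
    -- the iterates of the Inexact Gradient Method with Memory
    (x : ℕ → E) (hxint : ∀ k, x k ∈ interior S)
    -- at step `k`: a bundle `Z_k` with `x_k ∈ Z_k ⊆ {x_0, …, x_k}`
    (m : ℕ → ℕ) (hm : ∀ k, 0 < m k)
    (z : (k : ℕ) → Fin (m k) → E) (hzS : ∀ k i, z k i ∈ S)
    (hxmem : ∀ k, ∃ j, z k j = x k)
    (hZsub : ∀ k i, ∃ j ≤ k, z k i = x j)
    (lam : (k : ℕ) → Fin (m k) → ℝ) (hlam : ∀ k, lam k ∈ stdSimplex ℝ (Fin (m k)))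
    -- `x_{k+1} = y*_L(L∇d(x_k) − G_k λ̄_k)`
    (hsucc : ∀ k, ∀ y ∈ S,
      (L • d' (x k) - ∑ i, lam k i • f' (z k i)) y - L * d y - ψ y ≤
      (L • d' (x k) - ∑ i, lam k i • f' (z k i)) (x (k + 1)) - L * d (x (k + 1))
        - ψ (x (k + 1)))
    -- approximate stationarity: `⟨λ̄_k − λ, f_{*,k} − G_kᵀ x_{k+1}⟩ ≤ δ` for all `λ ∈ Δ_{m_k}`
    (hstat : ∀ k, ∀ ν ∈ stdSimplex ℝ (Fin (m k)),
      ∑ i, (lam k i - ν i) *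
        ((f' (z k i)) (z k i) - f (z k i) - (f' (z k i)) (x (k + 1))) ≤ δ)
    -- `x*` is a minimizer of `F = f + ψ`
    (xstar : E) (hxstarS : xstar ∈ S)
    (hxstar : ∀ y ∈ S, f xstar + ψ xstar ≤ f y + ψ y)
    (T : ℕ) (hT : 1 ≤ T)
    -- `F(x_k) − F* ≥ δ` for `1 ≤ k ≤ T`
    (hbig : ∀ k, 1 ≤ k → k ≤ T → δ ≤ f (x k) + ψ (x k) - (f xstar + ψ xstar)) :
    (Finset.Icc 1 T).inf' (Finset.nonempty_Icc.mpr hT)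
        (fun k => f (x k) + ψ (x k) - (f xstar + ψ xstar)) ≤
      δ + ((1 - μ / L) ^ T * μ / (1 - (1 - μ / L) ^ T)) * β (x 0) xstar ∧
    δ + ((1 - μ / L) ^ T * μ / (1 - (1 - μ / L) ^ T)) * β (x 0) xstar ≤
      δ + (μ / (Real.exp ((μ / L) * T) - 1)) * β (x 0) xstar ∧
    δ + (μ / (Real.exp ((μ / L) * T) - 1)) * β (x 0) xstar ≤
      δ + (L / (T : ℝ)) * β (x 0) xstar :=
  gmm_th_RateIGMMb_general Sd U S hSU hUSd hUopen hSconv d f ψ d' f' hdconv hd' hψconv β hβ μ Lf hμ0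
    hμLf hsmooth L δ hL x hxint m z hxmem hZsub lam hlam hsucc hstat xstar hxstarS T hT hbig
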